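/- Let w : ℝ³ → ℝ³ be continuously differentiable with div w(x) = 0 for all x ∈ ℝ³ and with ∫_{ℝ³} |w(x)|² dx < ∞, and let u : ℝ³ → ℝ³ be continuously differentiable with compact support. Set K := sup_{x ∈ ℝ³} ‖Du(x)‖ (finite, since Du is continuous and compactly supported). Then |∫_{ℝ³} ((curl w)(x) × w(x)) · u(x) dx| ≤ (5/2) · K · ∫_{ℝ³} |w(x)|² dx. -/

import Mathlib

/-! Pointwise, `(curl w × w) · u = ⟨Dw w, u⟩ - ⟨w, Dw u⟩ = D⟨w, u⟩(w) - ⟨Du w, w⟩ - ½ D|w|²(u)`.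
Integrating by parts, `∫ Dφ(V) = -∫ (div V) φ` whenever `V` or `φ` has compact support; applied to
`φ = ⟨w, u⟩, V = w` this kills the first term since `div w = 0`, and applied to `φ = |w|², V = u`
it turns the last one into `½ ∫ (div u) |w|²`. The bound then holds pointwise, as
`|div u| ≤ 3 ‖Du‖` and `|⟨Du w, w⟩| ≤ ‖Du‖ |w|²`. -/

open scoped RealInnerProductSpace
open MeasureTheory

noncomputable section

/-- Three-dimensional Euclidean space. -/
abbrev E3 : Type := EuclideanSpace ℝ (Fin 3)

/-- Cross product of vectors in `E3`. -/
def cross (a b : E3) : E3 :=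
  WithLp.toLp 2 ![a 1 * b 2 - a 2 * b 1, a 2 * b 0 - a 0 * b 2, a 0 * b 1 - a 1 * b 0]

/-- Divergence of a vector field: trace of the Jacobian,
`div v (x) = ∑ i, ∂ᵢ vᵢ (x)`. -/
def vdiv (v : E3 → E3) (x : E3) : ℝ :=
  ∑ i, fderiv ℝ v x (EuclideanSpace.single i 1) i

/-- Curl of a vector field (with 0-indexed coordinates):
`curl v = (∂₁v₂ − ∂₂v₁, ∂₂v₀ − ∂₀v₂, ∂₀v₁ − ∂₁v₀)`. -/
def curl (v : E3 → E3) (x : E3) : E3 :=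
  WithLp.toLp 2 ![fderiv ℝ v x (EuclideanSpace.single 1 1) 2 - fderiv ℝ v x (EuclideanSpace.single 2 1) 1,
    fderiv ℝ v x (EuclideanSpace.single 2 1) 0 - fderiv ℝ v x (EuclideanSpace.single 0 1) 2,
    fderiv ℝ v x (EuclideanSpace.single 0 1) 1 - fderiv ℝ v x (EuclideanSpace.single 1 1) 0]

section IntegrationByParts

variable {E : Type*} [NormedAddCommGroup E] [NormedSpace ℝ E] [MeasurableSpace E]
  [BorelSpace E] {μ : Measure E} {f g : E → ℝ}

theorem integrable_mul_fderiv_of_hasCompactSupport [IsFiniteMeasureOnCompacts μ]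
    (hf : ContDiff ℝ 1 f) (hg : ContDiff ℝ 1 g) (hfg : HasCompactSupport f ∨ HasCompactSupport g)
    (v : E) : Integrable (fun x ↦ f x * fderiv ℝ g x v) μ :=
  (hf.continuous.mul ((hg.continuous_fderiv one_ne_zero).clm_apply continuous_const))
    |>.integrable_of_hasCompactSupport
      (hfg.elim (·.mul_right) (·.fderiv_apply (𝕜 := ℝ) v |>.mul_left))

theorem integrable_fderiv_apply_of_hasCompactSupport [IsFiniteMeasureOnCompacts μ] {V : E → E}
    (hV : Continuous V) (hf : ContDiff ℝ 1 f) (hVf : HasCompactSupport V ∨ HasCompactSupport f) :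
    Integrable (fun x ↦ fderiv ℝ f x (V x)) μ := by
  refine ((hf.continuous_fderiv one_ne_zero).clm_apply hV).integrable_of_hasCompactSupport ?_
  rcases hVf with hV | hf
  · exact hV.mono fun x hx h ↦ hx (by simp [h])
  · exact hf.fderiv (𝕜 := ℝ) |>.mono fun x hx h ↦ hx (by simp [h])

theorem integral_mul_fderiv_eq_neg_fderiv_mul_of_hasCompactSupport [FiniteDimensional ℝ E]
    [μ.IsAddHaarMeasure] (hf : ContDiff ℝ 1 f) (hg : ContDiff ℝ 1 g)
    (hfg : HasCompactSupport f ∨ HasCompactSupport g) (v : E) :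
    ∫ x, f x * fderiv ℝ g x v ∂μ = -∫ x, fderiv ℝ f x v * g x ∂μ :=
  integral_mul_fderiv_eq_neg_fderiv_mul_of_integrable
    (by simpa only [mul_comm] using integrable_mul_fderiv_of_hasCompactSupport hg hf hfg.symm v)
    (integrable_mul_fderiv_of_hasCompactSupport hf hg hfg v)
    ((hf.continuous.mul hg.continuous).integrable_of_hasCompactSupport
      (hfg.elim (·.mul_right) (·.mul_left)))
    (fun x _ ↦ hf.differentiable one_ne_zero x) (fun x _ ↦ hg.differentiable one_ne_zero x)

end IntegrationByParts

section Euclidean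

variable {ι : Type*}

theorem fderiv_euclidean_apply [Fintype ι] {H : Type*} [NormedAddCommGroup H] [NormedSpace ℝ H]
    {V : H → EuclideanSpace ℝ ι} {x : H} (hV : DifferentiableAt ℝ V x) (i : ι) (a : H) :
    fderiv ℝ (fun y ↦ V y i) x a = fderiv ℝ V x a i :=
  congrArg (· a) ((EuclideanSpace.proj i).hasFDerivAt.comp x hV.hasFDerivAt).fderiv

theorem ContinuousLinearMap.apply_eq_sum_smul_single [Fintype ι] [DecidableEq ι] {F : Type*}
    [NormedAddCommGroup F] [NormedSpace ℝ F] (L : EuclideanSpace ℝ ι →L[ℝ] F)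
    (a : EuclideanSpace ℝ ι) : L a = ∑ j, a j • L (EuclideanSpace.single j 1) := by
  conv_lhs => rw [← (EuclideanSpace.basisFun ι ℝ).sum_repr a]
  simp [map_sum]

theorem HasCompactSupport.euclidean_apply {α : Type*} [TopologicalSpace α]
    {V : α → EuclideanSpace ℝ ι} (hV : HasCompactSupport V) (j : ι) :
    HasCompactSupport fun x ↦ V x j :=
  hV.comp_left (g := fun z : EuclideanSpace ℝ ι ↦ z j) rfl

end Euclidean

theorem integral_fderiv_apply_eq_neg_integral_vdiv_mul {V : E3 → E3} {φ : E3 → ℝ}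
    (hV : ContDiff ℝ 1 V) (hφ : ContDiff ℝ 1 φ)
    (hVφ : HasCompactSupport V ∨ HasCompactSupport φ) :
    ∫ x, fderiv ℝ φ x (V x) = -∫ x, vdiv V x * φ x := by
  have hVj (j : Fin 3) : ContDiff ℝ 1 fun x ↦ V x j := contDiff_euclidean.1 hV j
  have hVjφ (j : Fin 3) : HasCompactSupport (fun x ↦ V x j) ∨ HasCompactSupport φ :=
    hVφ.imp_left (·.euclidean_apply j)
  have ibp (j : Fin 3) := integral_mul_fderiv_eq_neg_fderiv_mul_of_hasCompactSupport (μ := volume)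
    (hVj j) hφ (hVjφ j) (EuclideanSpace.single j 1)
  calc ∫ x, fderiv ℝ φ x (V x)
      = ∑ j, ∫ x, V x j * fderiv ℝ φ x (EuclideanSpace.single j 1) := by
        rw [← integral_finsetSum _ fun j _ ↦
          integrable_mul_fderiv_of_hasCompactSupport (hVj j) hφ (hVjφ j) _]
        congr 1 with x
        rw [(fderiv ℝ φ x).apply_eq_sum_smul_single]
        simp only [smul_eq_mul]
    _ = -∑ j, ∫ x, fderiv ℝ (fun y ↦ V y j) x (EuclideanSpace.single j 1) * φ x := by
        simp only [ibp, Finset.sum_neg_distrib]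
    _ = -∫ x, vdiv V x * φ x := by
        rw [← integral_finsetSum _ fun j _ ↦ by
          simpa only [mul_comm] using
            integrable_mul_fderiv_of_hasCompactSupport hφ (hVj j) (hVjφ j).symm _]
        simp only [vdiv, Finset.sum_mul,
          fderiv_euclidean_apply ((hV.differentiable one_ne_zero) _)]

theorem inner_cross_curl (v : E3 → E3) (x a b : E3) :
    ⟪cross (curl v x) a, b⟫ = ⟪fderiv ℝ v x a, b⟫ - ⟪a, fderiv ℝ v x b⟫ := by
  rw [(fderiv ℝ v x).apply_eq_sum_smul_single a, (fderiv ℝ v x).apply_eq_sum_smul_single b]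
  simp only [cross, curl, Matrix.cons_val_one, Matrix.cons_val_zero, Matrix.cons_val,
    PiLp.inner_apply, RCLike.inner_apply, Real.ringHom_apply, Fin.sum_univ_three, PiLp.add_apply,
    PiLp.smul_apply, smul_eq_mul]
  ring

theorem inner_cross_curl_eq_fderiv_inner_sub {w u : E3 → E3} {x : E3}
    (hw : DifferentiableAt ℝ w x) (hu : DifferentiableAt ℝ u x) :
    ⟪cross (curl w x) (w x), u x⟫
      = fderiv ℝ (fun y ↦ ⟪w y, u y⟫) x (w x) - ⟪fderiv ℝ u x (w x), w x⟫
        - fderiv ℝ (fun y ↦ ‖w y‖ ^ 2) x (u x) / 2 := by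
  rw [inner_cross_curl, fderiv_inner_apply ℝ hw hu, hw.hasFDerivAt.norm_sq.fderiv]
  simp [real_inner_comm]

theorem integral_inner_cross_curl_eq {w u : E3 → E3} (hw : ContDiff ℝ 1 w)
    (hwdiv : ∀ x, vdiv w x = 0) (hu : ContDiff ℝ 1 u) (husupp : HasCompactSupport u) :
    ∫ x, ⟪cross (curl w x) (w x), u x⟫
      = ∫ x, (vdiv u x * ‖w x‖ ^ 2 / 2 - ⟪fderiv ℝ u x (w x), w x⟫) := by
  have hwu : ContDiff ℝ 1 fun y ↦ ⟪w y, u y⟫ := hw.inner ℝ hu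
  have hwu_supp : HasCompactSupport fun y ↦ ⟪w y, u y⟫ :=
    husupp.mono fun x hx h ↦ hx (by simp [h])
  have hww : ContDiff ℝ 1 fun y ↦ ‖w y‖ ^ 2 := hw.norm_sq ℝ
  have h_wu : ∫ x, fderiv ℝ (fun y ↦ ⟪w y, u y⟫) x (w x) = 0 := by
    simp [integral_fderiv_apply_eq_neg_integral_vdiv_mul hw hwu (Or.inr hwu_supp), hwdiv]
  have h_ww : ∫ x, fderiv ℝ (fun y ↦ ‖w y‖ ^ 2) x (u x) = -∫ x, vdiv u x * ‖w x‖ ^ 2 :=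
    integral_fderiv_apply_eq_neg_integral_vdiv_mul hu hww (Or.inl husupp)
  have hDu : Continuous (fderiv ℝ u) := hu.continuous_fderiv one_ne_zero
  have hDu_supp : HasCompactSupport (fderiv ℝ u) := husupp.fderiv (𝕜 := ℝ)
  have hint_wu : Integrable fun x ↦ fderiv ℝ (fun y ↦ ⟪w y, u y⟫) x (w x) :=
    integrable_fderiv_apply_of_hasCompactSupport hw.continuous hwu (Or.inr hwu_supp)
  have hint_ww : Integrable fun x ↦ fderiv ℝ (fun y ↦ ‖w y‖ ^ 2) x (u x) :=
    integrable_fderiv_apply_of_hasCompactSupport hu.continuous hww (Or.inl husupp)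
  have hint_Du : Integrable fun x ↦ ⟪fderiv ℝ u x (w x), w x⟫ :=
    ((hDu.clm_apply hw.continuous).inner hw.continuous).integrable_of_hasCompactSupport
      (hDu_supp.mono fun x hx h ↦ hx (by simp [h]))
  have hint_div : Integrable fun x ↦ vdiv u x * ‖w x‖ ^ 2 := by
    refine Continuous.integrable_of_hasCompactSupport ?_
      (hDu_supp.mono fun x hx h ↦ hx (by simp [vdiv, h]))
    exact (continuous_finsetSum _ fun i _ ↦ (EuclideanSpace.proj i).continuous.comp
      (hDu.clm_apply continuous_const)).mul (hw.continuous.norm.pow 2)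
  simp only [inner_cross_curl_eq_fderiv_inner_sub (hw.differentiable one_ne_zero _)
    (hu.differentiable one_ne_zero _)]
  rw [integral_sub (by exact hint_wu.sub hint_Du) (hint_ww.div_const 2),
    integral_sub hint_wu hint_Du, integral_sub (by exact hint_div.div_const 2) hint_Du,
    integral_div, integral_div, h_wu, h_ww]
  ring

theorem abs_vdiv_le (v : E3 → E3) (x : E3) : |vdiv v x| ≤ 3 * ‖fderiv ℝ v x‖ := by
  have hdiag (i : Fin 3) : |fderiv ℝ v x (EuclideanSpace.single i 1) i| ≤ ‖fderiv ℝ v x‖ :=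
    calc |fderiv ℝ v x (EuclideanSpace.single i 1) i|
        ≤ ‖fderiv ℝ v x (EuclideanSpace.single i 1)‖ :=
          (Real.norm_eq_abs _).ge.trans (PiLp.norm_apply_le _ i)
      _ ≤ ‖fderiv ℝ v x‖ := by simpa using (fderiv ℝ v x).le_opNorm (EuclideanSpace.single i 1)
  calc |vdiv v x| ≤ ∑ i, |fderiv ℝ v x (EuclideanSpace.single i 1) i| :=
        Finset.abs_sum_le_sum_abs _ _
    _ ≤ ∑ _i : Fin 3, ‖fderiv ℝ v x‖ := Finset.sum_le_sum fun i _ ↦ hdiag i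
    _ = 3 * ‖fderiv ℝ v x‖ := by simp

theorem abs_vdiv_mul_norm_sq_div_two_sub_inner_le (v : E3 → E3) (x a : E3) :
    |vdiv v x * ‖a‖ ^ 2 / 2 - ⟪fderiv ℝ v x a, a⟫| ≤ 5 / 2 * ‖fderiv ℝ v x‖ * ‖a‖ ^ 2 := by
  have hinner : |⟪fderiv ℝ v x a, a⟫| ≤ ‖fderiv ℝ v x‖ * ‖a‖ ^ 2 :=
    calc |⟪fderiv ℝ v x a, a⟫| ≤ ‖fderiv ℝ v x a‖ * ‖a‖ := abs_real_inner_le_norm _ _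
      _ ≤ ‖fderiv ℝ v x‖ * ‖a‖ * ‖a‖ := by gcongr; exact (fderiv ℝ v x).le_opNorm a
      _ = ‖fderiv ℝ v x‖ * ‖a‖ ^ 2 := by ring
  have hdiv : |vdiv v x * ‖a‖ ^ 2 / 2| ≤ 3 / 2 * ‖fderiv ℝ v x‖ * ‖a‖ ^ 2 := by
    rw [abs_div, abs_mul, abs_of_nonneg (sq_nonneg ‖a‖), abs_two]
    nlinarith [abs_vdiv_le v x, sq_nonneg ‖a‖]
  calc _ ≤ |vdiv v x * ‖a‖ ^ 2 / 2| + |⟪fderiv ℝ v x a, a⟫| := abs_sub _ _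
    _ ≤ 5 / 2 * ‖fderiv ℝ v x‖ * ‖a‖ ^ 2 := by linarith

/-- For `w` continuously differentiable, divergence-free and square
integrable, and `u` continuously differentiable with compact support, with
`K := ⨆ x, ‖Du(x)‖`, one has `|∫ ((curl w) × w) · u| ≤ (5/2) K ∫ |w|²`. -/
theorem abs_integral_curl_cross_inner_le
    (w u : E3 → E3) (hw : ContDiff ℝ 1 w) (hwdiv : ∀ x, vdiv w x = 0)
    (hwL2 : Integrable (fun x => ‖w x‖ ^ 2))
    (hu : ContDiff ℝ 1 u) (husupp : HasCompactSupport u) :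
    |∫ x, ⟪cross (curl w x) (w x), u x⟫|
      ≤ (5 / 2) * (⨆ x, ‖fderiv ℝ u x‖) * ∫ x, ‖w x‖ ^ 2 := by
  have hK (x : E3) : ‖fderiv ℝ u x‖ ≤ ⨆ x, ‖fderiv ℝ u x‖ :=
    le_ciSup ((hu.continuous_fderiv one_ne_zero).norm.bddAbove_range_of_hasCompactSupport
      (husupp.fderiv (𝕜 := ℝ)).norm) x
  have hpoint (x : E3) : |vdiv u x * ‖w x‖ ^ 2 / 2 - ⟪fderiv ℝ u x (w x), w x⟫|
      ≤ 5 / 2 * (⨆ x, ‖fderiv ℝ u x‖) * ‖w x‖ ^ 2 :=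
    (abs_vdiv_mul_norm_sq_div_two_sub_inner_le u x (w x)).trans (by gcongr; exact hK x)
  calc |∫ x, ⟪cross (curl w x) (w x), u x⟫|
      = |∫ x, (vdiv u x * ‖w x‖ ^ 2 / 2 - ⟪fderiv ℝ u x (w x), w x⟫)| := by
        rw [integral_inner_cross_curl_eq hw hwdiv hu husupp]
    _ ≤ ∫ x, |vdiv u x * ‖w x‖ ^ 2 / 2 - ⟪fderiv ℝ u x (w x), w x⟫| :=
        abs_integral_le_integral_abs
    _ ≤ ∫ x, 5 / 2 * (⨆ x, ‖fderiv ℝ u x‖) * ‖w x‖ ^ 2 :=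
        integral_mono_of_nonneg (ae_of_all _ fun _ ↦ abs_nonneg _) (hwL2.const_mul _)
          (ae_of_all _ hpoint)
    _ = 5 / 2 * (⨆ x, ‖fderiv ℝ u x‖) * ∫ x, ‖w x‖ ^ 2 := integral_const_mul _ _

end
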